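/- Let M → [1] be a cartesian fibration over the walking arrow classifying a functor G : D → C, where C = M₀ and D = M₁ are the fibers. Then the functor P(D) → P(C) between presheaf categories given by left Kan extension along the inclusion D ⊆ M followed by restriction along the inclusion C ⊆ M agrees (up to natural isomorphism) with left Kan extension of the composite D → C → P(C) along the Yoneda embedding, i.e. it is the colimit-preserving extension of y_C ∘ G. Consequently the Yoneda embeddings assemble into a map of cartesian fibrations M → P^{[1]}(M) over [1]. -/

import Mathlib

/-!
STATEMENT 17: Let `M ⥤ [1]` be a cartesian fibration over the walking arrow
classifying a functor `G : D ⥤ C`, where `C = M₀` and `D = M₁` are the fibers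
(the classification being witnessed by cartesian lifts `ℓ_d : G(d) ⟶ d` of
the arrow `0 ⟶ 1`, natural in `d`).  Then the functor `P(D) ⥤ P(C)` between
presheaf categories given by left Kan extension along the inclusion `D ⊆ M`
followed by restriction along the inclusion `C ⊆ M` agrees, up to natural
isomorphism, with the colimit-preserving extension of `y_C ∘ G` along the
Yoneda embedding: it preserves colimits and its composite with the Yoneda
embedding of `D` is naturally isomorphic to `G ⋙ yoneda`.  (In particular
the Yoneda embeddings of the fibers assemble into a map of cartesian
fibrations `M ⟶ P^{[1]}(M)` over `[1]`.)
-/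

open CategoryTheory Limits

universe u

variable {M : Type u} [Category.{u} M]

/-- A morphism `g : X ⟶ Y` is `p`-cartesian. -/
def IsCartesianMor {E B : Type*} [Category E] [Category B] (p : E ⥤ B)
    {X Y : E} (g : X ⟶ Y) : Prop :=
  ∀ (Z : E) (h : Z ⟶ Y) (u : p.obj Z ⟶ p.obj X),
    p.map h = u ≫ p.map g → ∃! k : Z ⟶ X, p.map k = u ∧ k ≫ g = h

/-- The fiber of `p : M ⥤ [1]` over `i`. -/
abbrev Fiber (p : M ⥤ Fin 2) (i : Fin 2) := ObjectProperty.FullSubcategory (fun X => p.obj X = i)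

/-- The inclusion of the fiber into `M`. -/
abbrev fiberIncl (p : M ⥤ Fin 2) (i : Fin 2) : Fiber p i ⥤ M :=
  ObjectProperty.ι _

/-- The functor `P(M₁) ⥤ P(M₀)` on presheaf categories: left Kan extension
along the inclusion `M₁ ⊆ M` followed by restriction along the inclusion
`M₀ ⊆ M`. -/
noncomputable def lanRestrict (p : M ⥤ Fin 2) :
    ((Fiber p 1)ᵒᵖ ⥤ Type u) ⥤ ((Fiber p 0)ᵒᵖ ⥤ Type u) :=
  (fiberIncl p 1).op.lan ⋙ (Functor.whiskeringLeft _ _ (Type u)).obj (fiberIncl p 0).op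

/-!
Composition with the cartesian lift `ℓ d` identifies `Hom_C(c, G d)` with `Hom_M(c, d)`,
naturally in `c` and `d`, so the restriction to `C` of the representable `y_M d` is
`y_C (G d)`. Left Kan extension along `D ⊆ M` sends `y_D d` to `y_M d`, which gives the
isomorphism on representables; colimits are preserved because left Kan extension and
restriction are both left adjoints.
-/

universe v

namespace IsCartesianMor

variable {E B : Type*} [Category E] [Category B] [Quiver.IsThin B] {p : E ⥤ B}
  {X Y : E} {g : X ⟶ Y}

/-- Over a thin base the condition `p.map k = u` on lifts holds automatically. -/
lemma bijective_comp (hg : IsCartesianMor p g) {Z : E} (u : p.obj Z ⟶ p.obj X) :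
    Function.Bijective fun k : Z ⟶ X => k ≫ g := by
  refine ⟨fun k k' hkk' => ?_, fun h => ?_⟩
  · exact (hg Z (k' ≫ g) u (Subsingleton.elim _ _)).unique
      ⟨Subsingleton.elim _ _, hkk'⟩ ⟨Subsingleton.elim _ _, rfl⟩
  · obtain ⟨k, ⟨-, hk⟩, -⟩ := hg Z h u (Subsingleton.elim _ _)
    exact ⟨k, hk⟩

end IsCartesianMor

noncomputable def compYonedaIsoOfBijective {C D E : Type*} [Category.{v} C] [Category.{v} D]
    [Category.{v} E] {G : D ⥤ C} {I : C ⥤ E} {J : D ⥤ E} (ℓ : G ⋙ I ⟶ J)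
    (hℓ : ∀ c d, Function.Bijective fun k : c ⟶ G.obj d => I.map k ≫ ℓ.app d) :
    G ⋙ yoneda ≅ J ⋙ yoneda ⋙ (Functor.whiskeringLeft _ _ (Type v)).obj I.op :=
  NatIso.ofComponents
    (fun d => NatIso.ofComponents (fun c => (Equiv.ofBijective _ (hℓ c.unop d)).toIso)
      (fun f => by ext k; simp))
    (fun f => by ext c k; simp [← ℓ.naturality f])

noncomputable def yonedaCompLanIso {C D : Type u} [Category.{u} C] [Category.{u} D]
    (F : C ⥤ D) : yoneda ⋙ F.op.lan ≅ F ⋙ yoneda :=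
  Functor.isoWhiskerRight uliftYonedaIsoYoneda.{u}.symm _ ≪≫
    (Presheaf.compULiftYonedaIsoULiftYonedaCompLan.{0} F).symm ≪≫
    Functor.isoWhiskerLeft _ uliftYonedaIsoYoneda.{u}

lemma bijective_fiberIncl_map_comp {p : M ⥤ Fin 2} {G : Fiber p 1 ⥤ Fiber p 0}
    {ℓ : G ⋙ fiberIncl p 0 ⟶ fiberIncl p 1} (hcart : ∀ d, IsCartesianMor p (ℓ.app d))
    (c : Fiber p 0) (d : Fiber p 1) :
    Function.Bijective fun k : c ⟶ G.obj d => (fiberIncl p 0).map k ≫ ℓ.app d :=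
  ((hcart d).bijective_comp (eqToHom (c.property.trans (G.obj d).property.symm))).comp
    ((ObjectProperty.fullyFaithfulι _).map_bijective _ _)

instance preservesColimits_lanRestrict (p : M ⥤ Fin 2) :
    PreservesColimitsOfSize.{u, u} (lanRestrict p) :=
  have := ((fiberIncl p 1).op.lanAdjunction (Type u)).leftAdjoint_preservesColimits
  have := ((fiberIncl p 0).op.ranAdjunction (Type u)).leftAdjoint_preservesColimits
  comp_preservesColimits _ _

theorem statement17 (p : M ⥤ Fin 2)
    (G : Fiber p 1 ⥤ Fiber p 0)
    (ℓ : ∀ d : Fiber p 1, (G.obj d).obj ⟶ d.obj)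
    (hnat : ∀ {d d' : Fiber p 1} (f : d ⟶ d'),
      (fiberIncl p 0).map (G.map f) ≫ ℓ d' = ℓ d ≫ (fiberIncl p 1).map f)
    (hcart : ∀ d : Fiber p 1, IsCartesianMor p (ℓ d)) :
    Nonempty (yoneda ⋙ lanRestrict p ≅ G ⋙ yoneda) ∧
    Nonempty (PreservesColimitsOfSize.{u, u} (lanRestrict p)) := by
  let ℓ' : G ⋙ fiberIncl p 0 ⟶ fiberIncl p 1 := { app := ℓ, naturality := fun _ _ f => hnat f }
  refine ⟨⟨?_⟩, ⟨inferInstance⟩⟩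
  unfold lanRestrict
  exact (Functor.associator _ _ _).symm ≪≫
    Functor.isoWhiskerRight (yonedaCompLanIso (fiberIncl p 1)) _ ≪≫ Functor.associator _ _ _ ≪≫
    (compYonedaIsoOfBijective ℓ' (bijective_fiberIncl_map_comp hcart)).symm
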